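/- Equivalence form of Herbrand's theorem: for `Th : index → compound` over a countable atom type, the theory is inconsistent (every total Boolean valuation falsifies some `Th i`) if and only if there exists a finite tree `t` with `Htree Th t = true`. -/
import Mathlib


inductive Compound (atom : Type) : Type where
  | Atomic : atom → Compound atom
  | And : Compound atom → Compound atom → Compound atom
  | Or : Compound atom → Compound atom → Compound atom
  | Not : Compound atom → Compound atom

variable {atom index : Type}

/-- Total Boolean evaluation of a compound. -/
def cEval (val : atom → Bool) : Compound atom → Bool
  | .Atomic a => val a
  | .And c d => cEval val c && cEval val d
  | .Or c d => cEval val c || cEval val d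
  | .Not c => !cEval val c

/-- A path is a finite partial Boolean valuation on atoms. -/
abbrev PPath (atom : Type) : Type := List (atom × Bool)

/-- Lookup of an atom in a path. -/
def findA [DecidableEq atom] (p : PPath atom) (a : atom) : Option Bool :=
  (p.find? (fun x => x.1 = a)).map Prod.snd

/-- Strict partial evaluation of a compound under a path. -/
def pEval [DecidableEq atom] (p : PPath atom) : Compound atom → Option Bool
  | .Atomic a => findA p a
  | .And c d =>
      match pEval p c, pEval p d with
      | some x, some y => some (x && y)
      | _, _ => none
  | .Or c d =>
      match pEval p c, pEval p d with
      | some x, some y => some (x || y)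
      | _, _ => none
  | .Not c => (pEval p c).map (fun b => !b)

/-- The list of atoms occurring in a compound. -/
def atomsOf : Compound atom → List atom
  | .Atomic a => [a]
  | .And c d => atomsOf c ++ atomsOf d
  | .Or c d => atomsOf c ++ atomsOf d
  | .Not c => atomsOf c

/-- Herbrand trees: leaves carry indices, nodes carry atoms. -/
inductive HTree (atom index : Type) : Type where
  | Contrad : index → HTree atom index
  | Exp : atom → HTree atom index → HTree atom index → HTree atom index

/-- Checker that `t` is a correct Herbrand tree relative to a starting path `p`. -/
def HtreeAt [DecidableEq atom] (Th : index → Compound atom) (p : PPath atom) :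
    HTree atom index → Bool
  | .Contrad i => pEval p (Th i) == some false
  | .Exp a t₁ t₂ =>
      (findA p a == none) && HtreeAt Th ((a, true) :: p) t₁
        && HtreeAt Th ((a, false) :: p) t₂

/-- Checker that `t` is a Herbrand tree for the theory `Th`. -/
def Htree [DecidableEq atom] (Th : index → Compound atom) (t : HTree atom index) : Bool :=
  HtreeAt Th [] t

/-- `q` extends `p` as a partial valuation. -/
def PathExtends [DecidableEq atom] (q p : PPath atom) : Prop :=
  ∀ a b, findA p a = some b → findA q a = some b

/-- A total valuation `val` extends the path `p`. -/
def ValExtends [DecidableEq atom] (val : atom → Bool) (p : PPath atom) : Prop :=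
  ∀ a b, findA p a = some b → val a = b

/-- The `good` predicate: reflects the existence of a Herbrand sub-tree below `p`. -/
inductive good [DecidableEq atom] (Th : index → Compound atom) : PPath atom → Prop where
  | good_leaf : ∀ p i, pEval p (Th i) = some false → good Th p
  | good_node : ∀ p a, findA p a = none → good Th ((a, true) :: p) →
      good Th ((a, false) :: p) → good Th p


section AuxLem
variable {atom index : Type} [DecidableEq atom]

lemma findA_cons (a : atom) (b : Bool) (p : PPath atom) (x : atom) :
    findA ((a, b) :: p) x = if a = x then some b else findA p x := by
  simp only [findA, List.find?_cons]
  by_cases h : a = x <;> simp [h]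

lemma pathExtends_cons {p : PPath atom} {a : atom} (b : Bool) (h : findA p a = none) :
    PathExtends ((a, b) :: p) p := by
  intro x c hx
  rw [findA_cons]
  split
  · next heq => rw [← heq] at hx; rw [h] at hx; exact absurd hx (by simp)
  · exact hx

lemma pEval_mono {p q : PPath atom} (h : PathExtends q p) :
    ∀ (c : Compound atom) {b : Bool}, pEval p c = some b → pEval q c = some b := by
  intro c
  induction c with
  | Atomic a => intro b hb; exact h a b hb
  | And c d ihc ihd =>
    intro b hb
    simp only [pEval] at hb ⊢
    cases hc : pEval p c with
    | none => rw [hc] at hb; simp at hb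
    | some x =>
      cases hd : pEval p d with
      | none => rw [hc, hd] at hb; simp at hb
      | some y =>
        rw [hc, hd] at hb
        rw [ihc hc, ihd hd]; exact hb
  | Or c d ihc ihd =>
    intro b hb
    simp only [pEval] at hb ⊢
    cases hc : pEval p c with
    | none => rw [hc] at hb; simp at hb
    | some x =>
      cases hd : pEval p d with
      | none => rw [hc, hd] at hb; simp at hb
      | some y =>
        rw [hc, hd] at hb
        rw [ihc hc, ihd hd]; exact hb
  | Not c ihc =>
    intro b hb
    simp only [pEval, Option.map_eq_some_iff] at hb ⊢
    obtain ⟨x, hx, hbx⟩ := hb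
    exact ⟨x, ihc hx, hbx⟩

lemma pEval_cEval {val : atom → Bool} {p : PPath atom} (h : ValExtends val p) :
    ∀ (c : Compound atom) {b : Bool}, pEval p c = some b → cEval val c = b := by
  intro c
  induction c with
  | Atomic a => intro b hb; exact h a b hb
  | And c d ihc ihd =>
    intro b hb
    simp only [pEval] at hb
    cases hc : pEval p c <;> cases hd : pEval p d <;> rw [hc, hd] at hb <;> simp at hb
    simp [cEval, ihc hc, ihd hd, ← hb]
  | Or c d ihc ihd =>
    intro b hb
    simp only [pEval] at hb
    cases hc : pEval p c <;> cases hd : pEval p d <;> rw [hc, hd] at hb <;> simp at hb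
    simp [cEval, ihc hc, ihd hd, ← hb]
  | Not c ihc =>
    intro b hb
    simp only [pEval, Option.map_eq_some_iff] at hb
    obtain ⟨x, hx, hbx⟩ := hb
    simp [cEval, ihc hx, ← hbx]

lemma atomsOf_ne_nil : ∀ c : Compound atom, atomsOf c ≠ [] := by
  intro c
  induction c with
  | Atomic a => simp [atomsOf]
  | And c d ihc ihd => simp only [atomsOf, ne_eq, List.append_eq_nil_iff]; exact fun h => ihc h.1
  | Or c d ihc ihd => simp only [atomsOf, ne_eq, List.append_eq_nil_iff]; exact fun h => ihc h.1
  | Not c ihc => simpa [atomsOf] using ihc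

lemma good_exists_tree (Th : index → Compound atom) : ∀ {p : PPath atom}, good Th p →
    ∃ t : HTree atom index, HtreeAt Th p t = true := by
  intro p h
  induction h with
  | good_leaf p i hi => exact ⟨.Contrad i, by simp [HtreeAt, hi]⟩
  | good_node p a ha h1 h2 ih1 ih2 =>
    obtain ⟨t1, h1'⟩ := ih1
    obtain ⟨t2, h2'⟩ := ih2
    exact ⟨.Exp a t1 t2, by simp [HtreeAt, ha, h1', h2']⟩

lemma valExtends_cons {val : atom → Bool} {p : PPath atom} {a : atom} {b : Bool}
    (h : ValExtends val p) (hab : val a = b) : ValExtends val ((a, b) :: p) := by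
  intro x c hx
  rw [findA_cons] at hx
  split at hx
  · next heq => subst heq; injection hx with h'; exact hab.trans h'
  · exact h x c hx

lemma htree_falsifies (Th : index → Compound atom) (val : atom → Bool) :
    ∀ (t : HTree atom index) (p : PPath atom), HtreeAt Th p t = true →
      ValExtends val p → ∃ i, cEval val (Th i) = false := by
  intro t
  induction t with
  | Contrad i =>
    intro p ht hv
    simp only [HtreeAt, beq_iff_eq] at ht
    exact ⟨i, pEval_cEval hv _ ht⟩
  | Exp a t1 t2 ih1 ih2 =>
    intro p ht hv
    simp only [HtreeAt, Bool.and_eq_true, beq_iff_eq] at ht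
    obtain ⟨⟨ha, h1⟩, h2⟩ := ht
    cases hva : val a with
    | false => exact ih2 ((a, false) :: p) h2 (valExtends_cons hv hva)
    | true => exact ih1 ((a, true) :: p) h1 (valExtends_cons hv hva)

lemma pEval_eventually {p : ℕ → PPath atom}
    (hmono : ∀ m n, m ≤ n → PathExtends (p n) (p m))
    (hatom : ∀ a : atom, ∃ n b, findA (p n) a = some b)
    (c : Compound atom) : ∃ n b, pEval (p n) c = some b := by
  induction c with
  | Atomic a => obtain ⟨n, b, h⟩ := hatom a; exact ⟨n, b, h⟩
  | And c d ihc ihd =>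
    obtain ⟨n1, b1, h1⟩ := ihc
    obtain ⟨n2, b2, h2⟩ := ihd
    refine ⟨max n1 n2, b1 && b2, ?_⟩
    have h1' := pEval_mono (hmono n1 (max n1 n2) (le_max_left _ _)) c h1
    have h2' := pEval_mono (hmono n2 (max n1 n2) (le_max_right _ _)) d h2
    simp [pEval, h1', h2']
  | Or c d ihc ihd =>
    obtain ⟨n1, b1, h1⟩ := ihc
    obtain ⟨n2, b2, h2⟩ := ihd
    refine ⟨max n1 n2, b1 || b2, ?_⟩
    have h1' := pEval_mono (hmono n1 (max n1 n2) (le_max_left _ _)) c h1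
    have h2' := pEval_mono (hmono n2 (max n1 n2) (le_max_right _ _)) d h2
    simp [pEval, h1', h2']
  | Not c ihc =>
    obtain ⟨n, b, h⟩ := ihc
    exact ⟨n, !b, by simp [pEval, h]⟩

open Classical in
noncomputable def buildPath (Th : index → Compound atom) (e : ℕ → atom) : ℕ → PPath atom
  | 0 => []
  | n + 1 =>
    let q := buildPath Th e n
    if findA q (e n) = none then
      (if good Th ((e n, true) :: q) then (e n, false) else (e n, true)) :: q
    else q

lemma buildPath_step (Th : index → Compound atom) (e : ℕ → atom) (n : ℕ) :
    PathExtends (buildPath Th e (n + 1)) (buildPath Th e n) := by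
  simp only [buildPath]
  split
  · next h =>
    split
    · exact pathExtends_cons _ h
    · exact pathExtends_cons _ h
  · intro a b h; exact h

lemma buildPath_mono (Th : index → Compound atom) (e : ℕ → atom) :
    ∀ n m, m ≤ n → PathExtends (buildPath Th e n) (buildPath Th e m) := by
  intro n
  induction n with
  | zero => intro m h; interval_cases m; intro a b hb; exact hb
  | succ k ih =>
    intro m h
    rcases Nat.lt_or_ge m (k + 1) with h' | h'
    · intro a b hb
      exact buildPath_step Th e k a b (ih m (Nat.lt_succ_iff.mp h') a b hb)
    · have hm : m = k + 1 := le_antisymm h h'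
      subst hm; intro a b hb; exact hb

lemma buildPath_not_good (Th : index → Compound atom) (e : ℕ → atom)
    (h0 : ¬ good Th ([] : PPath atom)) : ∀ n, ¬ good Th (buildPath Th e n) := by
  intro n
  induction n with
  | zero => exact h0
  | succ k ih =>
    simp only [buildPath]
    split
    · next hfind =>
      split
      · next hg => intro hgf; exact ih (good.good_node _ _ hfind hg hgf)
      · next hg => exact hg
    · exact ih

lemma buildPath_assigned (Th : index → Compound atom) (e : ℕ → atom) (n : ℕ) :
    ∃ b, findA (buildPath Th e (n + 1)) (e n) = some b := by
  simp only [buildPath]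
  split
  · next h =>
    split
    · exact ⟨false, by rw [findA_cons]; simp⟩
    · exact ⟨true, by rw [findA_cons]; simp⟩
  · next h =>
    cases hf : findA (buildPath Th e n) (e n) with
    | none => exact absurd hf h
    | some b => exact ⟨b, rfl⟩

end AuxLem

/-- equivalence form of Herbrand's theorem. -/
theorem herbrand_iff {atom index : Type} [DecidableEq atom] [Countable atom]
    [Countable index] [Nonempty index] (Th : index → Compound atom) :
    (∀ val : atom → Bool, ∃ i : index, cEval val (Th i) = false) ↔
      (∃ t : HTree atom index, Htree Th t = true) := by
  constructor
  · intro hval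
    by_contra hne
    push_neg at hne
    have hgood : ¬ good Th [] := by
      intro hg
      obtain ⟨t, ht⟩ := good_exists_tree Th hg
      exact absurd ht (by simpa [Htree] using hne t)
    obtain ⟨i0⟩ := (inferInstance : Nonempty index)
    have hatomne : Nonempty atom := by
      cases h : atomsOf (Th i0) with
      | nil => exact absurd h (atomsOf_ne_nil _)
      | cons a _ => exact ⟨a⟩
    obtain ⟨e, he⟩ := exists_surjective_nat atom
    set p := buildPath Th e with hp
    have hmono : ∀ m n, m ≤ n → PathExtends (p n) (p m) :=
      fun m n h => buildPath_mono Th e n m h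
    have hng : ∀ n, ¬ good Th (p n) := buildPath_not_good Th e hgood
    have hmI : ∀ a : atom, ∃ n, e n = a := fun a => he a
    set m : atom → ℕ := fun a => Classical.choose (hmI a) with hm
    have hassigned : ∀ a : atom, ∃ b, findA (p (m a + 1)) a = some b := by
      intro a
      have := buildPath_assigned Th e (m a)
      rwa [Classical.choose_spec (hmI a)] at this
    set val : atom → Bool := fun a => (findA (p (m a + 1)) a).getD true with hvaldef
    have hvala : ∀ a b, findA (p (m a + 1)) a = some b → val a = b := by
      intro a b h; simp [hvaldef, h]
    have hValExt : ∀ n, ValExtends val (p n) := by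
      intro n a b hb
      obtain ⟨c, hc⟩ := hassigned a
      have h1 : findA (p (max n (m a + 1))) a = some b :=
        hmono n _ (le_max_left _ _) a b hb
      have h2 : findA (p (max n (m a + 1))) a = some c :=
        hmono (m a + 1) _ (le_max_right _ _) a c hc
      rw [h1] at h2
      injection h2 with h2
      rw [hvala a c hc, h2]
    have hatom' : ∀ a : atom, ∃ n b, findA (p n) a = some b := by
      intro a
      obtain ⟨b, hb⟩ := hassigned a
      exact ⟨m a + 1, b, hb⟩
    obtain ⟨i, hiv⟩ := hval val
    obtain ⟨n, b, hnb⟩ := pEval_eventually hmono hatom' (Th i)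
    have hcb : cEval val (Th i) = b := pEval_cEval (hValExt n) (Th i) hnb
    have hbf : b = false := by rw [← hcb, hiv]
    subst hbf
    exact hng n (good.good_leaf _ i hnb)
  · rintro ⟨t, ht⟩ val
    have hve : ValExtends val ([] : PPath atom) := by
      intro a b h
      simp [findA] at h
    exact htree_falsifies Th val t [] ht hve
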